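/- arXiv:2408.16898 — 2 statements merged into one kernel-verified Lean document; each statement's English description precedes it below -/
import Mathlib

section
/- Let Θ be a Polish space with a compatible metric, and let f : Θ → ℝ be a bounded measurable function with set of non-lower-semicontinuity points D_-(f). Let Π be a nonempty weakly closed set of Borel probability measures such that π(D_-(f)) = 0 for every π ∈ Π (assuming D_-(f) is Borel measurable). Then for every sequence (π_n) of probability measures converging weakly to some π₀ ∈ Π, liminf_n ∫ f dπ_n ≥ inf_{π ∈ Π} ∫ f dπ. -/
open MeasureTheory Filter Topology

section LscEnv

variable {Θ : Type*} [TopologicalSpace Θ]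

/-- The lower semicontinuous envelope of `f`. -/
noncomputable def lscEnv (f : Θ → ℝ) (θ : Θ) : ℝ := liminf f (𝓝 θ)

variable {f : Θ → ℝ} {M : ℝ}

lemma lscEnv_bddBelow (hfb : ∀ θ, |f θ| ≤ M) (θ : Θ) :
    (𝓝 θ).IsBoundedUnder (· ≥ ·) f :=
  isBoundedUnder_of ⟨-M, fun x => (abs_le.1 (hfb x)).1⟩

lemma lscEnv_cobdd (hfb : ∀ θ, |f θ| ≤ M) (θ : Θ) :
    (𝓝 θ).IsCoboundedUnder (· ≥ ·) f :=
  (isBoundedUnder_of ⟨M, fun x => (abs_le.1 (hfb x)).2⟩ :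
    (𝓝 θ).IsBoundedUnder (· ≤ ·) f).isCoboundedUnder_ge

lemma lscEnv_le (hfb : ∀ θ, |f θ| ≤ M) (θ : Θ) : lscEnv f θ ≤ f θ :=
  liminf_le_of_frequently_le
    (Filter.frequently_iff.2 fun hU => ⟨θ, mem_of_mem_nhds hU, le_rfl⟩)
    (lscEnv_bddBelow hfb θ)

lemma le_lscEnv (hfb : ∀ θ, |f θ| ≤ M) (θ : Θ) : -M ≤ lscEnv f θ :=
  le_liminf_of_le (lscEnv_cobdd hfb θ)
    (Eventually.of_forall fun x => (abs_le.1 (hfb x)).1)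

lemma lscEnv_lsc (hfb : ∀ θ, |f θ| ≤ M) : LowerSemicontinuous (lscEnv f) := by
  intro θ c hc
  obtain ⟨c', hcc', hc'⟩ := exists_between hc
  have hev : ∀ᶠ x in 𝓝 θ, c' < f x :=
    eventually_lt_of_lt_liminf hc' (lscEnv_bddBelow hfb θ)
  obtain ⟨U, hUsub, hUopen, hθU⟩ := eventually_nhds_iff.1 hev
  filter_upwards [hUopen.mem_nhds hθU] with x hx
  have : c' ≤ lscEnv f x :=
    le_liminf_of_le (lscEnv_cobdd hfb x)
      (eventually_nhds_iff.2 ⟨U, fun y hy => (hUsub y hy).le, hUopen, hx⟩)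
  exact lt_of_lt_of_le hcc' this

lemma lscEnv_eq_of_lscAt (hfb : ∀ θ, |f θ| ≤ M) {θ : Θ}
    (h : LowerSemicontinuousAt f θ) : lscEnv f θ = f θ := by
  refine le_antisymm (lscEnv_le hfb θ) ?_
  refine le_of_forall_lt fun c hc => ?_
  obtain ⟨c', hcc', hc'⟩ := exists_between hc
  exact lt_of_lt_of_le hcc'
    (le_liminf_of_le (lscEnv_cobdd hfb θ) ((h c' hc').mono fun x hx => hx.le))

end LscEnv

/-- Portmanteau-type inequality for bounded nonnegative lsc functions. -/
lemma lsc_integral_le_liminf {Θ : Type*} [TopologicalSpace Θ] [MeasurableSpace Θ]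
    [OpensMeasurableSpace Θ] (g : Θ → ℝ) (hg : LowerSemicontinuous g) (C : ℝ)
    (hg0 : ∀ θ, 0 ≤ g θ) (hgC : ∀ θ, g θ ≤ C)
    (μ : Measure Θ) (μs : ℕ → Measure Θ) [IsProbabilityMeasure μ]
    [∀ i, IsProbabilityMeasure (μs i)]
    (h_opens : ∀ G, IsOpen G → μ G ≤ atTop.liminf (fun i => μs i G)) :
    ∫ x, g x ∂μ ≤ atTop.liminf fun i => ∫ x, g x ∂(μs i) := by
  have hgm : Measurable g := hg.measurable
  have key : ∫⁻ x, ENNReal.ofReal (g x) ∂μ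
      ≤ atTop.liminf (fun i => ∫⁻ x, ENNReal.ofReal (g x) ∂(μs i)) := by
    simp_rw [lintegral_eq_lintegral_meas_lt _ (Eventually.of_forall hg0) hgm.aemeasurable]
    calc ∫⁻ (t : ℝ) in Set.Ioi 0, μ {a | t < g a}
        ≤ ∫⁻ (t : ℝ) in Set.Ioi 0, atTop.liminf (fun i => (μs i) {a | t < g a}) :=
          lintegral_mono fun t => h_opens _ (hg.isOpen_preimage t)
      _ ≤ atTop.liminf (fun i => ∫⁻ (t : ℝ) in Set.Ioi 0, (μs i) {a | t < g a}) :=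
          lintegral_liminf_le fun n => Antitone.measurable (fun s t hst =>
            measure_mono fun ω hω => lt_of_le_of_lt hst hω)
  have bound : ∀ (ν : Measure Θ) [IsProbabilityMeasure ν],
      ∫⁻ x, ENNReal.ofReal (g x) ∂ν ≤ ENNReal.ofReal C := by
    intro ν _
    calc ∫⁻ x, ENNReal.ofReal (g x) ∂ν
        ≤ ∫⁻ _, ENNReal.ofReal C ∂ν :=
          lintegral_mono fun x => ENNReal.ofReal_le_ofReal (hgC x)
      _ = ENNReal.ofReal C := by simp
  have hne : atTop.liminf (fun i => ∫⁻ x, ENNReal.ofReal (g x) ∂(μs i)) ≠ ⊤ := by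
    refine ne_top_of_le_ne_top (ENNReal.ofReal_ne_top (r := C)) ?_
    exact liminf_le_of_frequently_le'
      ((Eventually.of_forall fun i => bound (μs i)).frequently)
  have hrepr : ∀ (ν : Measure Θ) [IsProbabilityMeasure ν],
      ∫ x, g x ∂ν = (∫⁻ x, ENNReal.ofReal (g x) ∂ν).toReal := fun ν _ =>
    integral_eq_lintegral_of_nonneg_ae (Eventually.of_forall hg0)
      hgm.aestronglyMeasurable
  rw [hrepr μ]
  have : (∫⁻ x, ENNReal.ofReal (g x) ∂μ).toReal
      ≤ (atTop.liminf (fun i => ∫⁻ x, ENNReal.ofReal (g x) ∂(μs i))).toReal :=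
    ENNReal.toReal_mono hne key
  refine this.trans_eq ?_
  rw [← ENNReal.liminf_toReal_eq ENNReal.ofReal_ne_top
    (Eventually.of_forall fun i => bound (μs i))]
  simp_rw [← hrepr]

/-- If every prior in the nonempty weakly closed ambiguity set `P` assigns
probability zero to the set of non-lower-semicontinuity points of the bounded measurable
value function `f`, then the payoff guarantee of `f` over `P` is robust. -/
theorem stmt5 {Θ : Type*} [TopologicalSpace Θ] [PolishSpace Θ] [MeasurableSpace Θ] [BorelSpace Θ]
    (f : Θ → ℝ) (M : ℝ) (hfb : ∀ θ, |f θ| ≤ M) (hfm : Measurable f)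
    (hDm : MeasurableSet {θ : Θ | ¬ LowerSemicontinuousAt f θ})
    (P : Set (ProbabilityMeasure Θ)) (hP : P.Nonempty) (hPc : IsClosed P)
    (hnull : ∀ π ∈ P, (π : Measure Θ) {θ : Θ | ¬ LowerSemicontinuousAt f θ} = 0)
    (πs : ℕ → ProbabilityMeasure Θ) (π₀ : ProbabilityMeasure Θ)
    (hπ₀ : π₀ ∈ P) (hconv : Tendsto πs atTop (𝓝 π₀)) :
    sInf ((fun π : ProbabilityMeasure Θ => ∫ θ, f θ ∂(π : Measure Θ)) '' P)
      ≤ liminf (fun n => ∫ θ, f θ ∂(πs n : Measure Θ)) atTop := by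
  -- Θ is nonempty (it carries a probability measure)
  cases isEmpty_or_nonempty Θ with
  | inl h =>
    exfalso
    have h1 : (π₀ : Measure Θ) Set.univ = 1 := measure_univ
    rw [Set.univ_eq_empty_iff.2 h, measure_empty] at h1
    exact zero_ne_one h1
  | inr hne =>
  have hM0 : 0 ≤ M := (abs_nonneg _).trans (hfb (Classical.arbitrary Θ))
  set g : Θ → ℝ := lscEnv f with hg_def
  have hgle : ∀ θ, g θ ≤ f θ := lscEnv_le hfb
  have hgge : ∀ θ, -M ≤ g θ := le_lscEnv hfb
  have hglsc : LowerSemicontinuous g := lscEnv_lsc hfb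
  have hgm : Measurable g := hglsc.measurable
  have hgb : ∀ θ, |g θ| ≤ M := fun θ =>
    abs_le.2 ⟨hgge θ, (hgle θ).trans ((abs_le.1 (hfb θ)).2)⟩
  -- integrability of bounded measurable functions
  have hint : ∀ (ν : Measure Θ) [IsProbabilityMeasure ν] (u : Θ → ℝ),
      Measurable u → (∀ θ, |u θ| ≤ M) → Integrable u ν := by
    intro ν _ u hum hub
    exact (integrable_const M).mono' hum.aestronglyMeasurable
      (Eventually.of_forall fun θ => by simpa using hub θ)
  -- bound on integrals
  have hIb : ∀ (ν : Measure Θ) [IsProbabilityMeasure ν] (u : Θ → ℝ),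
      (∀ θ, |u θ| ≤ M) → |∫ θ, u θ ∂ν| ≤ M := by
    intro ν _ u hub
    have := norm_integral_le_of_norm_le_const (μ := ν) (f := u) (C := M)
      (Eventually.of_forall fun θ => by simpa using hub θ)
    simpa using this
  -- Step 1: sInf ≤ ∫ f dπ₀
  have step1 : sInf ((fun π : ProbabilityMeasure Θ => ∫ θ, f θ ∂(π : Measure Θ)) '' P)
      ≤ ∫ θ, f θ ∂(π₀ : Measure Θ) := by
    refine csInf_le ⟨-M, ?_⟩ (Set.mem_image_of_mem _ hπ₀)
    rintro x ⟨π, _, rfl⟩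
    exact neg_le_of_abs_le (hIb π f hfb)
  -- Step 2: ∫ f dπ₀ = ∫ g dπ₀
  have step2 : ∫ θ, f θ ∂(π₀ : Measure Θ) = ∫ θ, g θ ∂(π₀ : Measure Θ) := by
    apply integral_congr_ae
    rw [Filter.EventuallyEq, ae_iff]
    refine measure_mono_null ?_ (hnull π₀ hπ₀)
    intro θ hθ
    simp only [Set.mem_setOf_eq] at hθ ⊢
    intro hlsc
    exact hθ (lscEnv_eq_of_lscAt hfb hlsc).symm
  -- open set liminf condition
  have h_opens : ∀ G, IsOpen G →
      (π₀ : Measure Θ) G ≤ atTop.liminf (fun i => (πs i : Measure Θ) G) := by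
    intro G hG
    exact le_measure_liminf_of_limsup_measure_compl_le hG.measurableSet
      (ProbabilityMeasure.limsup_measure_closed_le_of_tendsto hconv hG.isClosed_compl)
  -- Step 3: ∫ g dπ₀ ≤ liminf ∫ g dπₙ, via the shifted function g + M
  have step3 : ∫ θ, g θ ∂(π₀ : Measure Θ)
      ≤ atTop.liminf (fun n => ∫ θ, g θ ∂(πs n : Measure Θ)) := by
    set h : Θ → ℝ := fun θ => g θ + M with hh_def
    have hhlsc : LowerSemicontinuous h := by
      intro x c hc
      have := hglsc x (c - M) (by simpa [hh_def] using sub_lt_iff_lt_add.2 hc)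
      filter_upwards [this] with y hy
      simp only [hh_def]
      linarith
    have hh0 : ∀ θ, 0 ≤ h θ := fun θ => by simp only [hh_def]; linarith [hgge θ]
    have hhC : ∀ θ, h θ ≤ M + M := fun θ => by
      simp only [hh_def]; linarith [(abs_le.1 (hgb θ)).2]
    have key := lsc_integral_le_liminf h hhlsc (M + M) hh0 hhC
      (π₀ : Measure Θ) (fun n => (πs n : Measure Θ)) h_opens
    have hrep : ∀ (ν : Measure Θ) [IsProbabilityMeasure ν],
        ∫ θ, h θ ∂ν = ∫ θ, g θ ∂ν + M := by
      intro ν _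
      rw [hh_def]
      rw [integral_add (hint ν g hgm hgb) (integrable_const M)]
      simp
    rw [hrep (π₀ : Measure Θ)] at key
    have heq : atTop.liminf (fun n => ∫ θ, h θ ∂(πs n : Measure Θ))
        = atTop.liminf (fun n => ∫ θ, g θ ∂(πs n : Measure Θ)) + M := by
      have : (fun n => ∫ θ, h θ ∂(πs n : Measure Θ))
          = fun n => ∫ θ, g θ ∂(πs n : Measure Θ) + M := by
        funext n; exact hrep (πs n : Measure Θ)
      rw [this]
      exact liminf_add_const atTop (fun n => ∫ θ, g θ ∂(πs n : Measure Θ)) M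
        ((isBoundedUnder_of ⟨M, fun n =>
            (abs_le.1 (hIb (πs n : Measure Θ) g hgb)).2⟩ :
          atTop.IsBoundedUnder (· ≤ ·) _).isCoboundedUnder_ge)
        (isBoundedUnder_of ⟨-M, fun n => (abs_le.1 (hIb (πs n : Measure Θ) g hgb)).1⟩)
    rw [heq] at key
    linarith
  -- Step 4: liminf ∫ g ≤ liminf ∫ f
  have step4 : atTop.liminf (fun n => ∫ θ, g θ ∂(πs n : Measure Θ))
      ≤ atTop.liminf (fun n => ∫ θ, f θ ∂(πs n : Measure Θ)) := by
    refine liminf_le_liminf (Eventually.of_forall fun n => ?_) ?_ ?_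
    · exact integral_mono (hint _ g hgm hgb) (hint _ f hfm hfb) hgle
    · exact isBoundedUnder_of ⟨-M, fun n =>
        (abs_le.1 (hIb (πs n : Measure Θ) g hgb)).1⟩
    · exact (isBoundedUnder_of ⟨M, fun n =>
        (abs_le.1 (hIb (πs n : Measure Θ) f hfb)).2⟩ :
          atTop.IsBoundedUnder (· ≤ ·) _).isCoboundedUnder_ge
  calc sInf ((fun π : ProbabilityMeasure Θ => ∫ θ, f θ ∂(π : Measure Θ)) '' P)
      ≤ ∫ θ, f θ ∂(π₀ : Measure Θ) := step1
    _ = ∫ θ, g θ ∂(π₀ : Measure Θ) := step2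
    _ ≤ atTop.liminf (fun n => ∫ θ, g θ ∂(πs n : Measure Θ)) := step3
    _ ≤ atTop.liminf (fun n => ∫ θ, f θ ∂(πs n : Measure Θ)) := step4
end

section
/- Let Θ be a Polish space, u bounded, and for each value function v : Θ → ℝ bounded measurable define V_v(r) = inf over π in the radius-r D-neighborhood of a fixed nonempty set Π of ∫ v dπ, where D is a jointly convex metric on probability measures. Then for all r, r' > 0 and every bounded measurable v with ‖v‖_∞ ≤ M, |V_v(r') − V_v(r)| ≤ (2M/r)|r − r'|. In particular r ↦ V_v(r) is continuous on (0, ∞). -/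
open MeasureTheory Filter Topology

/-- Convex combination `l•μ + (1-l)•ν` of two probability measures. -/
noncomputable def mix {Θ : Type*} [MeasurableSpace Θ] (l : ℝ) (hl0 : 0 ≤ l) (hl1 : l ≤ 1)
    (μ ν : ProbabilityMeasure Θ) : ProbabilityMeasure Θ :=
  ⟨ENNReal.ofReal l • (μ : Measure Θ) + ENNReal.ofReal (1 - l) • (ν : Measure Θ), by
    constructor
    simp only [Measure.coe_add, Measure.coe_smul, Pi.add_apply, Pi.smul_apply,
      measure_univ, smul_eq_mul, mul_one]
    rw [← ENNReal.ofReal_add hl0 (by linarith), add_sub_cancel, ENNReal.ofReal_one]⟩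

/-- Distance from a prior to a set of priors. -/
noncomputable def distToSet {Θ : Type*} [MeasurableSpace Θ]
    (D : ProbabilityMeasure Θ → ProbabilityMeasure Θ → ℝ)
    (π : ProbabilityMeasure Θ) (P : Set (ProbabilityMeasure Θ)) : ℝ :=
  sInf ((fun π' => D π π') '' P)

/-- The radius-`r` `D`-neighborhood of a set of priors. -/
def nbhd {Θ : Type*} [MeasurableSpace Θ]
    (D : ProbabilityMeasure Θ → ProbabilityMeasure Θ → ℝ)
    (P : Set (ProbabilityMeasure Θ)) (r : ℝ) : Set (ProbabilityMeasure Θ) :=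
  {π | distToSet D π P ≤ r}

/-- The payoff guarantee of value function `v` over the radius-`r` neighborhood of `P`. -/
noncomputable def guarantee {Θ : Type*} [MeasurableSpace Θ]
    (D : ProbabilityMeasure Θ → ProbabilityMeasure Θ → ℝ)
    (P : Set (ProbabilityMeasure Θ)) (v : Θ → ℝ) (r : ℝ) : ℝ :=
  sInf ((fun π : ProbabilityMeasure Θ => ∫ θ, v θ ∂(π : Measure Θ)) '' nbhd D P r)

private lemma mix_self {Θ : Type*} [MeasurableSpace Θ] (l : ℝ) (hl0 : 0 ≤ l) (hl1 : l ≤ 1)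
    (μ : ProbabilityMeasure Θ) : mix l hl0 hl1 μ μ = μ := by
  apply Subtype.ext
  show ENNReal.ofReal l • (μ : Measure Θ) + ENNReal.ofReal (1 - l) • (μ : Measure Θ) = μ
  rw [← add_smul, ← ENNReal.ofReal_add hl0 (by linarith), add_sub_cancel, ENNReal.ofReal_one,
    one_smul]

private lemma integral_mix {Θ : Type*} [MeasurableSpace Θ] (l : ℝ) (hl0 : 0 ≤ l) (hl1 : l ≤ 1)
    (μ ν : ProbabilityMeasure Θ) (v : Θ → ℝ) (hμ : Integrable v (μ : Measure Θ))
    (hν : Integrable v (ν : Measure Θ)) :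
    ∫ θ, v θ ∂(mix l hl0 hl1 μ ν : Measure Θ)
      = l * ∫ θ, v θ ∂(μ : Measure Θ) + (1 - l) * ∫ θ, v θ ∂(ν : Measure Θ) := by
  show ∫ θ, v θ ∂(ENNReal.ofReal l • (μ : Measure Θ) + ENNReal.ofReal (1 - l) • (ν : Measure Θ))
      = _
  rw [integral_add_measure (hμ.smul_measure ENNReal.ofReal_ne_top)
    (hν.smul_measure ENNReal.ofReal_ne_top), integral_smul_measure, integral_smul_measure,
    ENNReal.toReal_ofReal hl0, ENNReal.toReal_ofReal (by linarith)]
  simp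

/-- The payoff guarantee over the radius-`r` neighborhood is Lipschitz in the
radius, locally uniformly: `|V_v(r') − V_v(r)| ≤ (2M/r)|r − r'|`; in particular it is
continuous on `(0, ∞)`. -/
theorem stmt14 {Θ : Type*} [TopologicalSpace Θ] [PolishSpace Θ] [MeasurableSpace Θ] [BorelSpace Θ]
    (D : ProbabilityMeasure Θ → ProbabilityMeasure Θ → ℝ)
    (hD0 : ∀ μ ν, 0 ≤ D μ ν) (hDsymm : ∀ μ ν, D μ ν = D ν μ)
    (hDtri : ∀ μ ν ρ, D μ ρ ≤ D μ ν + D ν ρ)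
    (hDeq : ∀ μ ν, D μ ν = 0 ↔ μ = ν)
    (hDconv : ∀ (l : ℝ) (hl0 : 0 ≤ l) (hl1 : l ≤ 1) (μ₁ μ₂ ν₁ ν₂ : ProbabilityMeasure Θ),
      D (mix l hl0 hl1 μ₁ μ₂) (mix l hl0 hl1 ν₁ ν₂) ≤ l * D μ₁ ν₁ + (1 - l) * D μ₂ ν₂)
    (P : Set (ProbabilityMeasure Θ)) (hP : P.Nonempty) :
    (∀ (v : Θ → ℝ) (M : ℝ), (∀ θ, |v θ| ≤ M) → Measurable v →
      ∀ r r' : ℝ, 0 < r → 0 < r' →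
        |guarantee D P v r' - guarantee D P v r| ≤ (2 * M / r) * |r - r'|) ∧
    (∀ (v : Θ → ℝ) (M : ℝ), (∀ θ, |v θ| ≤ M) → Measurable v →
      ContinuousOn (guarantee D P v) (Set.Ioi (0 : ℝ))) := by
  obtain ⟨π₀, hπ₀⟩ := hP
  have key : ∀ (v : Θ → ℝ) (M : ℝ), (∀ θ, |v θ| ≤ M) → Measurable v →
      ∀ r r' : ℝ, 0 < r → 0 < r' →
        |guarantee D P v r' - guarantee D P v r| ≤ (2 * M / r) * |r - r'| := by
    intro v M hM hv r r' hr hr'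
    have hint : ∀ π : ProbabilityMeasure Θ, Integrable v (π : Measure Θ) := fun π =>
      ⟨hv.aestronglyMeasurable, HasFiniteIntegral.of_bounded (C := M)
        (Filter.Eventually.of_forall fun θ => hM θ)⟩
    have habs : ∀ π : ProbabilityMeasure Θ, |∫ θ, v θ ∂(π : Measure Θ)| ≤ M := fun π => by
      simpa using norm_integral_le_of_norm_le_const (μ := (π : Measure Θ)) (C := M) (f := v)
        (Filter.Eventually.of_forall fun θ => hM θ)
    have hM0 : 0 ≤ M := le_trans (abs_nonneg _) (habs π₀)
    have hbddD : ∀ π : ProbabilityMeasure Θ, BddBelow ((fun π' => D π π') '' P) :=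
      fun π => ⟨0, by rintro x ⟨π', _, rfl⟩; exact hD0 π π'⟩
    have hmemnbhd : ∀ s : ℝ, 0 ≤ s → π₀ ∈ nbhd D P s := by
      intro s hs
      have h1 : distToSet D π₀ P ≤ 0 := by
        have h := csInf_le (hbddD π₀) ⟨π₀, hπ₀, rfl⟩
        simp only [distToSet]
        simpa [(hDeq π₀ π₀).2 rfl] using h
      exact le_trans h1 hs
    have hneV : ∀ s : ℝ, 0 ≤ s →
        ((fun π : ProbabilityMeasure Θ => ∫ θ, v θ ∂(π : Measure Θ)) '' nbhd D P s).Nonempty :=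
      fun s hs => ⟨_, ⟨π₀, hmemnbhd s hs, rfl⟩⟩
    have hbddV : ∀ s : ℝ,
        BddBelow ((fun π : ProbabilityMeasure Θ => ∫ θ, v θ ∂(π : Measure Θ)) '' nbhd D P s) :=
      fun s => ⟨-M, by rintro x ⟨π, _, rfl⟩; exact neg_le_of_abs_le (habs π)⟩
    have hVlb : ∀ s : ℝ, 0 ≤ s → -M ≤ guarantee D P v s := fun s hs =>
      le_csInf (hneV s hs) (by rintro x ⟨π, _, rfl⟩; exact neg_le_of_abs_le (habs π))
    have hmono : ∀ s t : ℝ, 0 ≤ s → s ≤ t → guarantee D P v t ≤ guarantee D P v s := by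
      intro s t hs hst
      exact csInf_le_csInf (hbddV t) (hneV s hs)
        (Set.image_mono (fun π hπ => le_trans hπ hst))
    have lemA : ∀ s t : ℝ, 0 < s → s ≤ t →
        guarantee D P v s ≤ guarantee D P v t + (1 - s / t) * (2 * M) := by
      intro s t hs hst
      have ht : 0 < t := lt_of_lt_of_le hs hst
      apply le_of_forall_pos_le_add
      intro ε hε
      set δ : ℝ := ε * t / (2 * (2 * M + 1)) with hδdef
      have hδ : 0 < δ := by positivity
      obtain ⟨x, ⟨π, hπnb, rfl⟩, hx⟩ :=
        exists_lt_of_csInf_lt (hneV t ht.le)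
          (lt_add_of_pos_right (guarantee D P v t) (by linarith : (0:ℝ) < ε/2))
      have hPne : ((fun π' => D π π') '' P).Nonempty := ⟨_, π₀, hπ₀, rfl⟩
      have hπnb' : sInf ((fun π' => D π π') '' P) < t + δ :=
        lt_of_le_of_lt hπnb (by linarith : t < t + δ)
      obtain ⟨y, ⟨π', hπ'P, rfl⟩, hy⟩ := exists_lt_of_csInf_lt hPne hπnb'
      set l : ℝ := s / (t + δ) with hldef
      have hl0 : 0 ≤ l := by positivity
      have hl1 : l ≤ 1 := by
        rw [hldef, div_le_one (by linarith)]; linarith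
      set m := mix l hl0 hl1 π π' with hm
      have hmmem : m ∈ nbhd D P s := by
        have h1 : D m π' ≤ l * D π π' := by
          have hc := hDconv l hl0 hl1 π π' π' π'
          rw [mix_self] at hc
          have h0 := (hDeq π' π').2 rfl
          calc D m π' ≤ l * D π π' + (1 - l) * D π' π' := hc
            _ = l * D π π' := by rw [h0]; ring
        have h2 : l * D π π' ≤ l * (t + δ) := mul_le_mul_of_nonneg_left hy.le hl0
        have h3 : l * (t + δ) = s := div_mul_cancel₀ s (by linarith)
        have h4 : distToSet D m P ≤ D m π' := csInf_le (hbddD m) ⟨π', hπ'P, rfl⟩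
        simp only [nbhd, Set.mem_setOf_eq]
        linarith
      have hVs : guarantee D P v s ≤ ∫ θ, v θ ∂(m : Measure Θ) :=
        csInf_le (hbddV s) ⟨m, hmmem, rfl⟩
      rw [hm, integral_mix l hl0 hl1 π π' v (hint π) (hint π')] at hVs
      set A := ∫ θ, v θ ∂(π : Measure Θ)
      set B := ∫ θ, v θ ∂(π' : Measure Θ)
      have hB : B ≤ M := le_of_abs_le (habs π')
      have hVt : -M ≤ guarantee D P v t := hVlb t ht.le
      have key1 : l * A ≤ l * (guarantee D P v t + ε / 2) :=
        mul_le_mul_of_nonneg_left hx.le hl0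
      have key2 : (1 - l) * B ≤ (1 - l) * M :=
        mul_le_mul_of_nonneg_left hB (by linarith)
      have hql : s / t - l ≤ δ / t := by
        rw [hldef, div_sub_div _ _ (ne_of_gt ht) (by linarith : t + δ ≠ 0),
          div_le_div_iff₀ (by positivity) ht]
        nlinarith [mul_nonneg (mul_nonneg hδ.le ht.le) (by linarith : (0:ℝ) ≤ t + δ - s)]
      have hδt : δ / t = ε / (2 * (2 * M + 1)) := by
        rw [hδdef]; field_simp
      have hlsub : 2 * M * (s / t - l) ≤ ε / 2 := by
        have h1 : 2 * M * (s / t - l) ≤ 2 * M * (δ / t) :=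
          mul_le_mul_of_nonneg_left hql (by linarith)
        rw [hδt, mul_div_assoc'] at h1
        have h2 : 2 * M * ε / (2 * (2 * M + 1)) ≤ ε / 2 := by
          rw [div_le_div_iff₀ (by positivity) two_pos]
          nlinarith [mul_nonneg hM0 hε.le]
        linarith
      have step1 : guarantee D P v s ≤ l * (guarantee D P v t + ε / 2) + (1 - l) * M := by
        linarith
      have step2 : l * (guarantee D P v t + ε / 2) + (1 - l) * M
          = (guarantee D P v t + ε / 2) + (1 - l) * (M - guarantee D P v t - ε / 2) := by
        ring
      have step3 : (1 - l) * (M - guarantee D P v t - ε / 2) ≤ (1 - l) * (2 * M) :=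
        mul_le_mul_of_nonneg_left (by linarith) (by linarith)
      have step4 : (1 - l) * (2 * M) ≤ (1 - s / t) * (2 * M) + ε / 2 := by
        nlinarith [hlsub]
      linarith
    rcases le_total r' r with h | h
    · have h1 := lemA r' r hr' h
      have h2 := hmono r' r hr'.le h
      rw [abs_of_nonneg (by linarith : (0:ℝ) ≤ guarantee D P v r' - guarantee D P v r),
        abs_of_nonneg (by linarith : (0:ℝ) ≤ r - r')]
      have e1 : (1 - r' / r) * (2 * M) = 2 * M / r * (r - r') := by
        field_simp
      linarith
    · have h1 := lemA r r' hr h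
      have h2 := hmono r r' hr.le h
      rw [abs_of_nonpos (by linarith : guarantee D P v r' - guarantee D P v r ≤ 0),
        abs_of_nonpos (by linarith : r - r' ≤ 0)]
      have e1 : (1 - r / r') * (2 * M) = 2 * M * (r' - r) / r' := by
        field_simp
      have e2 : 2 * M * (r' - r) / r' ≤ 2 * M * (r' - r) / r :=
        div_le_div_of_nonneg_left (by nlinarith) hr h
      have e3 : 2 * M / r * -(r - r') = 2 * M * (r' - r) / r := by ring
      linarith
  refine ⟨key, ?_⟩
  intro v M hM hv a ha
  have ha' : (0:ℝ) < a := ha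
  have hM0 : 0 ≤ M := by
    have habs : |∫ θ, v θ ∂(π₀ : Measure Θ)| ≤ M := by
      simpa using norm_integral_le_of_norm_le_const (μ := (π₀ : Measure Θ)) (C := M) (f := v)
        (Filter.Eventually.of_forall fun θ => hM θ)
    exact le_trans (abs_nonneg _) habs
  rw [Metric.continuousWithinAt_iff]
  intro ε hε
  refine ⟨ε * a / (2 * M + a), by positivity, ?_⟩
  intro x hx hdist
  have hx' : (0:ℝ) < x := hx
  have hk := key v M hM hv a x ha' hx'
  rw [Real.dist_eq] at hdist ⊢
  have h1 : |a - x| = |x - a| := abs_sub_comm a x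
  have h2 : 2 * M / a * |a - x| ≤ 2 * M / a * (ε * a / (2 * M + a)) := by
    rw [h1]; exact mul_le_mul_of_nonneg_left hdist.le (by positivity)
  have h3 : 2 * M / a * (ε * a / (2 * M + a)) < ε := by
    rw [div_mul_div_comm, div_lt_iff₀ (by positivity : (0:ℝ) < a * (2 * M + a))]
    nlinarith [mul_pos hε (mul_pos ha' ha')]
  calc |guarantee D P v x - guarantee D P v a| ≤ 2 * M / a * |a - x| := hk
    _ < ε := lt_of_le_of_lt h2 h3
end
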